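/- arXiv:2006.16495 — 3 statements merged into one kernel-verified Lean document; each statement's English description precedes it below -/
import Mathlib

section
/- Let F̂(η) = f(w_{t,η}) = ½ Σ_{i=1}^d c_i² λ_i (1 − ηλ_i)^{2t} be the train-by-train meta objective. For every step size η with 0 < η < 2/L one has |1 − ηλ_i| < 1 for all i and |F̂'(η)| ≤ t Σ_{i=1}^d c_i² λ_i² |1 − ηλ_i|^{2t−1}; and for every step size η > 2/L one has |F̂'(η)| ≥ c_1² L² t (ηL − 1)^{2t−1} − L² t. (Thus the meta-gradient is exponentially small in t below 2/L and exponentially large in t above 2/L.) -/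
/-! Differentiating term by term, `F̂'(η) = -t Σᵢ cᵢ² λᵢ² (1 - ηλᵢ)^{2t-1}`. Below `2/L` every
factor `1 - ηλᵢ` lies in `(-1, 1)`, and the triangle inequality gives the upper bound. Above `2/L`
the top eigendirection contributes `c₁² L² t (ηL - 1)^{2t-1}` with a definite sign, because the
exponent is odd, while for `ηλᵢ ≥ 0` every other factor `(1 - ηλᵢ)^{2t-1}` is at most `1`, so the
remaining terms together are at most `L² Σᵢ cᵢ² ≤ L²`. -/

open Finset

section MetaObjective

variable {ι : Type*} [Fintype ι]

noncomputable def metaObjective (c lam : ι → ℝ) (t : ℕ) (η : ℝ) : ℝ :=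
  (1 / 2) * ∑ i, c i ^ 2 * lam i * (1 - η * lam i) ^ (2 * t)

theorem hasDerivAt_metaObjective (c lam : ι → ℝ) (t : ℕ) (η : ℝ) :
    HasDerivAt (metaObjective c lam t)
      (-(t : ℝ) * ∑ i, c i ^ 2 * lam i ^ 2 * (1 - η * lam i) ^ (2 * t - 1)) η := by
  have hterm (i : ι) : HasDerivAt (fun η : ℝ => c i ^ 2 * lam i * (1 - η * lam i) ^ (2 * t))
      (c i ^ 2 * lam i * (((2 * t : ℕ) : ℝ) * (1 - η * lam i) ^ (2 * t - 1) * (-lam i))) η := by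
    have hlin : HasDerivAt (fun η : ℝ => 1 - η * lam i) (-lam i) η := by
      simpa using (hasDerivAt_mul_const (lam i)).const_sub 1
    exact (hlin.pow (2 * t)).const_mul _
  refine ((HasDerivAt.fun_sum (u := univ) fun i _ => hterm i).const_mul (1 / 2 : ℝ)).congr_deriv
    ?_
  rw [mul_sum, mul_sum]
  refine sum_congr rfl fun i _ => ?_
  push_cast
  ring

theorem abs_deriv_metaObjective_le (c lam : ι → ℝ) (t : ℕ) (η : ℝ) :
    |deriv (metaObjective c lam t) η| ≤
      (t : ℝ) * ∑ i, c i ^ 2 * lam i ^ 2 * |1 - η * lam i| ^ (2 * t - 1) := by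
  rw [(hasDerivAt_metaObjective c lam t η).deriv, abs_mul, abs_neg, Nat.abs_cast]
  gcongr
  refine (abs_sum_le_sum_abs _ _).trans_eq (sum_congr rfl fun i _ => ?_)
  simp only [abs_mul, abs_pow, sq_abs]

theorem sum_sq_mul_sq_mul_one_sub_pow_le {n : ℕ} (hn : Odd n) {c lam : ι → ℝ} {L η : ℝ}
    (hη : 0 ≤ η) (hlam : ∀ i, 0 ≤ lam i) (hlamL : ∀ i, lam i ≤ L) (hc : ∑ i, c i ^ 2 ≤ 1)
    [DecidableEq ι] (j : ι) :
    ∑ i, c i ^ 2 * lam i ^ 2 * (1 - η * lam i) ^ n ≤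
      c j ^ 2 * lam j ^ 2 * (1 - η * lam j) ^ n + L ^ 2 := by
  have hterm (i : ι) : c i ^ 2 * lam i ^ 2 * (1 - η * lam i) ^ n ≤ c i ^ 2 * L ^ 2 := by
    have hpow : (1 - η * lam i) ^ n ≤ 1 := by
      simpa using hn.strictMono_pow.monotone (by nlinarith [hlam i] : 1 - η * lam i ≤ 1)
    have hsq : lam i ^ 2 ≤ L ^ 2 := pow_le_pow_left₀ (hlam i) (hlamL i) 2
    calc c i ^ 2 * lam i ^ 2 * (1 - η * lam i) ^ n ≤ c i ^ 2 * lam i ^ 2 :=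
          mul_le_of_le_one_right (by positivity) hpow
      _ ≤ c i ^ 2 * L ^ 2 := by gcongr
  have hrest : ∑ i ∈ univ.erase j, c i ^ 2 ≤ 1 :=
    (sum_le_sum_of_subset_of_nonneg (subset_univ _) fun i _ _ => sq_nonneg (c i)).trans hc
  rw [← add_sum_erase _ _ (mem_univ j)]
  gcongr
  calc ∑ i ∈ univ.erase j, c i ^ 2 * lam i ^ 2 * (1 - η * lam i) ^ n
      ≤ ∑ i ∈ univ.erase j, c i ^ 2 * L ^ 2 := sum_le_sum fun i _ => hterm i
    _ = L ^ 2 * ∑ i ∈ univ.erase j, c i ^ 2 := by rw [mul_sum]; simp only [mul_comm]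
    _ ≤ L ^ 2 := mul_le_of_le_one_right (sq_nonneg L) hrest

theorem deriv_metaObjective_ge {t : ℕ} (ht : 1 ≤ t) {c lam : ι → ℝ} {L η : ℝ}
    (hη : 0 ≤ η) (hlam : ∀ i, 0 ≤ lam i) (hlamL : ∀ i, lam i ≤ L) (hc : ∑ i, c i ^ 2 ≤ 1)
    (j : ι) (hj : lam j = L) :
    c j ^ 2 * L ^ 2 * t * (η * L - 1) ^ (2 * t - 1) - L ^ 2 * t ≤
      deriv (metaObjective c lam t) η := by
  classical
  have hodd : Odd (2 * t - 1) := ⟨t - 1, by omega⟩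
  have hsum := sum_sq_mul_sq_mul_one_sub_pow_le hodd hη hlam hlamL hc j
  rw [hj, show 1 - η * L = -(η * L - 1) by ring, hodd.neg_pow] at hsum
  rw [(hasDerivAt_metaObjective c lam t η).deriv]
  have ht0 : (0 : ℝ) ≤ t := Nat.cast_nonneg t
  linarith [mul_le_mul_of_nonneg_left hsum ht0]

end MetaObjective

theorem abs_one_sub_mul_lt_one {η lam L : ℝ} (hη : 0 < η) (hlam : 0 < lam) (hlamL : lam ≤ L)
    (hηL : η < 2 / L) : |1 - η * lam| < 1 := by
  have hL : 0 < L := hlam.trans_le hlamL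
  have hlt : η * lam < 2 := by
    calc η * lam < 2 / L * lam := by gcongr
      _ ≤ 2 / L * L := by gcongr
      _ = 2 := div_mul_cancel₀ 2 hL.ne'
  rw [abs_lt]
  constructor <;> nlinarith [mul_pos hη hlam]

/-- For the train-by-train meta objective
`F̂(η) = ½ Σᵢ cᵢ² λᵢ (1 − ηλᵢ)^{2t}`:  for `0 < η < 2/L` one has `|1 − ηλᵢ| < 1` for all `i` and
`|F̂'(η)| ≤ t Σᵢ cᵢ² λᵢ² |1 − ηλᵢ|^{2t−1}`; for `η > 2/L` one has
`|F̂'(η)| ≥ c₁² L² t (ηL − 1)^{2t−1} − L² t`. -/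
theorem stmt1 (d t : ℕ) (hd : 2 ≤ d) (ht : 1 ≤ t)
    (lam c : Fin d → ℝ)
    (hpos : ∀ i, 0 < lam i)
    (hdec : ∀ i j : Fin d, i ≤ j → lam j ≤ lam i)
    (L : ℝ)
    (hLdef : L = lam ⟨0, by omega⟩)
    (hcnorm : ∑ i, c i ^ 2 = 1)
    (F : ℝ → ℝ)
    (hF : ∀ η : ℝ, F η = (1 / 2) * ∑ i, c i ^ 2 * lam i * (1 - η * lam i) ^ (2 * t)) :
    (∀ η : ℝ, 0 < η → η < 2 / L →
        (∀ i, |1 - η * lam i| < 1) ∧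
        |deriv F η| ≤ (t : ℝ) * ∑ i, c i ^ 2 * lam i ^ 2 * |1 - η * lam i| ^ (2 * t - 1))
    ∧ (∀ η : ℝ, 2 / L < η →
        (c ⟨0, by omega⟩) ^ 2 * L ^ 2 * (t : ℝ) * (η * L - 1) ^ (2 * t - 1) - L ^ 2 * (t : ℝ)
          ≤ |deriv F η|) := by
  have hFeq : F = metaObjective c lam t := funext hF
  have hlamL (i : Fin d) : lam i ≤ L := hLdef ▸ hdec _ i (Nat.zero_le i.val)
  have hL : 0 < L := hLdef ▸ hpos _
  subst hFeq
  refine ⟨fun η hη hηL => ⟨fun i => abs_one_sub_mul_lt_one hη (hpos i) (hlamL i) hηL,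
    abs_deriv_metaObjective_le c lam t η⟩, fun η hη => ?_⟩
  have hη0 : 0 ≤ η := (div_pos two_pos hL).le.trans hη.le
  exact (deriv_metaObjective_ge ht hη0 (fun i => (hpos i).le) hlamL hcnorm.le _
    hLdef.symm).trans (le_abs_self _)
end

section
/- For every η > 0 at which N(η) ≥ 16Lσ², the derivative satisfies N'(η) ≥ 0. Consequently, if N(η) ≥ 16Lσ² for some η > 0, then N(η') ≥ 16Lσ² for every η' ≥ η; that is, once the norm of the t-th gradient-descent iterate reaches the threshold 4√L σ at some step size, it remains at or above this threshold for all larger step sizes. -/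
/-!
Write `u = 1 - ηλ`. For even `t` the elementary inequality
`(1 - uᵗ)² - 4 ≤ (1 - u)(1 - uᵗ)uᵗ⁻¹`, valid for all `u < 1`, says that each summand `g(η) = (1 - (1 - ηλ)ᵗ)²` of `N` satisfies
`η g'(η) ≥ 2t (g(η) - 4)`. Weighting by `cᵢ²` and using `4 Σ cᵢ² ≤ 16Lσ² =: K` gives
`η N'(η) ≥ 2t (N(η) - K)`. This gives `N' ≥ 0` wherever `N ≥ K`, and it makes
`(N(η) - K) η^(-2t)` nondecreasing on `η > 0`, so `N - K` stays nonnegative once it is.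
-/

open Set

theorem sq_one_sub_pow_sub_four_le {t : ℕ} (ht : Even t) {u : ℝ} (hu : u < 1) :
    (1 - u ^ t) ^ 2 - 4 ≤ (1 - u) * (1 - u ^ t) * u ^ (t - 1) := by
  obtain rfl | htpos := t.eq_zero_or_pos
  · norm_num
  rcases le_or_gt (-1) u with hu' | hu'
  · have habs : |u| ≤ 1 := abs_le.mpr ⟨hu', hu.le⟩
    have hpow_t : u ^ t ≤ 1 := by
      simpa [pow_abs, abs_of_nonneg (ht.pow_nonneg u)] using
        pow_le_one₀ (abs_nonneg u) habs (n := t)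
    have hpow_pred : -1 ≤ u ^ (t - 1) := by
      have := pow_le_one₀ (abs_nonneg u) habs (n := t - 1)
      rw [← abs_pow] at this
      exact (abs_le.mp this).1
    have hprod : 0 ≤ (1 - u) * (1 - u ^ t) := mul_nonneg (by linarith) (by linarith)
    nlinarith [ht.pow_nonneg u, mul_le_mul_of_nonneg_left hpow_pred hprod]
  · -- `p = u ^ (t - 1) ≤ 0` and `u ^ t = u * p ≥ 1`, so the right side is
    -- `(u p - 1)(u p - p) ≥ (u p - 1)²`.
    have hsplit : u ^ t = u * u ^ (t - 1) := by rw [← pow_succ', Nat.sub_add_cancel htpos]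
    have hp : u ^ (t - 1) ≤ 0 :=
      (Nat.Even.sub_odd htpos ht odd_one).pow_nonpos (by linarith)
    have hpow_t : 1 ≤ u ^ t := by
      rw [← ht.pow_abs]; exact one_le_pow₀ (by rw [abs_of_neg (by linarith)]; linarith)
    nlinarith [mul_le_mul_of_nonneg_left (show u * u ^ (t - 1) - 1 ≤ u * u ^ (t - 1) - u ^ (t - 1)
      by linarith) (show 0 ≤ u * u ^ (t - 1) - 1 by linarith)]

theorem hasDerivAt_sq_one_sub_one_sub_mul_pow (t : ℕ) (a η : ℝ) :
    HasDerivAt (fun η => (1 - (1 - η * a) ^ t) ^ 2)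
      (2 * (1 - (1 - η * a) ^ t) * (t * (1 - η * a) ^ (t - 1) * a)) η := by
  have h := (((hasDerivAt_mul_const (x := η) a).const_sub 1).fun_pow t |>.const_sub 1).fun_pow 2
  exact h.congr_deriv (by norm_num)

theorem two_mul_sq_one_sub_one_sub_mul_pow_sub_four_le {t : ℕ} (ht : Even t) {a η : ℝ}
    (hηa : 0 < η * a) :
    2 * t * ((1 - (1 - η * a) ^ t) ^ 2 - 4) ≤
      η * (2 * (1 - (1 - η * a) ^ t) * (t * (1 - η * a) ^ (t - 1) * a)) := by
  have key := sq_one_sub_pow_sub_four_le ht (u := 1 - η * a) (by linarith)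
  rw [sub_sub_cancel] at key
  calc 2 * t * ((1 - (1 - η * a) ^ t) ^ 2 - 4)
      ≤ 2 * t * (η * a * (1 - (1 - η * a) ^ t) * (1 - η * a) ^ (t - 1)) := by gcongr
    _ = _ := by ring

theorem monotoneOn_mul_rpow_neg_of_mul_le_mul_deriv {f f' : ℝ → ℝ} {k : ℝ}
    (hf : ∀ x > 0, HasDerivAt f (f' x) x) (hk : ∀ x > 0, k * f x ≤ x * f' x) :
    MonotoneOn (fun x => f x * x ^ (-k)) (Ioi 0) := by
  have hG : ∀ x > 0, HasDerivAt (fun x => f x * x ^ (-k))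
      (f' x * x ^ (-k) + f x * (-k * x ^ (-k - 1))) x := fun x hx =>
    (hf x hx).mul (Real.hasDerivAt_rpow_const (Or.inl hx.ne'))
  refine monotoneOn_of_hasDerivWithinAt_nonneg
    (f' := fun x => f' x * x ^ (-k) + f x * (-k * x ^ (-k - 1))) (convex_Ioi 0)
    (fun x hx => (hG x hx).continuousAt.continuousWithinAt) (fun x hx => ?_) (fun x hx => ?_)
  · rw [interior_Ioi] at hx ⊢
    exact (hG x hx).hasDerivWithinAt
  · rw [interior_Ioi] at hx
    have hx' : (0 : ℝ) < x := hx
    calc (0 : ℝ) ≤ (x * f' x - k * f x) * (x ^ (-k) / x) :=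
          mul_nonneg (by linarith [hk x hx']) (by positivity)
      _ = _ := by rw [Real.rpow_sub_one hx'.ne']; field_simp; ring

theorem nonneg_of_mul_le_mul_deriv {f f' : ℝ → ℝ} {k a b : ℝ}
    (hf : ∀ x > 0, HasDerivAt f (f' x) x) (hk : ∀ x > 0, k * f x ≤ x * f' x)
    (ha : 0 < a) (hfa : 0 ≤ f a) (hab : a ≤ b) : 0 ≤ f b := by
  have hmono := monotoneOn_mul_rpow_neg_of_mul_le_mul_deriv hf hk ha (ha.trans_le hab) hab
  have hb : 0 < b ^ (-k) := Real.rpow_pos_of_pos (ha.trans_le hab) _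
  exact nonneg_of_mul_nonneg_left
    ((mul_nonneg hfa (Real.rpow_pos_of_pos ha _).le).trans hmono) hb

section WeightedSum

variable {ι : Type*} [Fintype ι] (t : ℕ) (lam c : ι → ℝ)

theorem hasDerivAt_sum_sq_one_sub_one_sub_mul_pow_mul_sq (η : ℝ) :
    HasDerivAt (fun η => ∑ i, (1 - (1 - η * lam i) ^ t) ^ 2 * c i ^ 2)
      (∑ i, 2 * (1 - (1 - η * lam i) ^ t) * (t * (1 - η * lam i) ^ (t - 1) * lam i) * c i ^ 2)
      η :=
  HasDerivAt.fun_sum fun i _ =>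
    (hasDerivAt_sq_one_sub_one_sub_mul_pow t (lam i) η).mul_const (c i ^ 2)

variable {t lam}

theorem two_mul_sum_sq_one_sub_one_sub_mul_pow_mul_sq_sub_le (ht : Even t)
    (hlam : ∀ i, 0 < lam i) {η : ℝ} (hη : 0 < η) :
    2 * t * (∑ i, (1 - (1 - η * lam i) ^ t) ^ 2 * c i ^ 2 - 4 * ∑ i, c i ^ 2) ≤
      η * ∑ i, 2 * (1 - (1 - η * lam i) ^ t) * (t * (1 - η * lam i) ^ (t - 1) * lam i) *
        c i ^ 2 := by
  calc 2 * t * (∑ i, (1 - (1 - η * lam i) ^ t) ^ 2 * c i ^ 2 - 4 * ∑ i, c i ^ 2)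
      = ∑ i, 2 * t * ((1 - (1 - η * lam i) ^ t) ^ 2 - 4) * c i ^ 2 := by
        simp only [Finset.mul_sum, ← Finset.sum_sub_distrib]
        exact Finset.sum_congr rfl fun i _ => by ring
    _ ≤ ∑ i, η * (2 * (1 - (1 - η * lam i) ^ t) * (t * (1 - η * lam i) ^ (t - 1) * lam i)) *
          c i ^ 2 :=
        Finset.sum_le_sum fun i _ => mul_le_mul_of_nonneg_right
          (two_mul_sq_one_sub_one_sub_mul_pow_sub_four_le ht (mul_pos hη (hlam i))) (sq_nonneg _)
    _ = _ := by simp only [Finset.mul_sum, mul_assoc]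

end WeightedSum

theorem stmt13_general (d t : ℕ) (hteven : Even t)
    (lam c : Fin d → ℝ) (hlam : ∀ i, 0 < lam i)
    (σ L : ℝ)
    (hc : ∑ i, c i ^ 2 ≤ 4 * L * σ ^ 2)
    (N : ℝ → ℝ)
    (hN : ∀ η : ℝ, N η = ∑ i, (1 - (1 - η * lam i) ^ t) ^ 2 * c i ^ 2) :
    (∀ η : ℝ, 0 < η → 16 * L * σ ^ 2 ≤ N η → 0 ≤ deriv N η) ∧
    (∀ η : ℝ, 0 < η → 16 * L * σ ^ 2 ≤ N η →
      ∀ η' : ℝ, η ≤ η' → 16 * L * σ ^ 2 ≤ N η') := by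
  obtain ⟨N', hderiv, hgrowth₀⟩ : ∃ N' : ℝ → ℝ, (∀ η, HasDerivAt N (N' η) η) ∧
      ∀ η > 0, 2 * t * (N η - 4 * ∑ i, c i ^ 2) ≤ η * N' η :=
    ⟨_, fun η => funext hN ▸ hasDerivAt_sum_sq_one_sub_one_sub_mul_pow_mul_sq t lam c η,
      fun η hη => hN η ▸
        two_mul_sum_sq_one_sub_one_sub_mul_pow_mul_sq_sub_le c hteven hlam hη⟩
  have hgrowth : ∀ η > 0, 2 * t * (N η - 16 * L * σ ^ 2) ≤ η * N' η := fun η hη =>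
    le_trans (mul_le_mul_of_nonneg_left (by linarith) (by positivity)) (hgrowth₀ η hη)
  refine ⟨fun η hη hK => ?_, fun η hη hK η' hle => ?_⟩
  · rw [(hderiv η).deriv]
    exact nonneg_of_mul_nonneg_right
      ((mul_nonneg (by positivity) (sub_nonneg.2 hK)).trans (hgrowth η hη)) hη
  · exact sub_nonneg.1 (nonneg_of_mul_le_mul_deriv (f := fun x => N x - 16 * L * σ ^ 2)
      (fun x _ => (hderiv x).sub_const _) hgrowth hη (sub_nonneg.2 hK) hle)

/-- Let `t ≥ 2` be even, `λᵢ > 0`, `Σᵢ cᵢ² ≤ 4Lσ²`, and let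
`N(η) = Σᵢ (1 − (1 − ηλᵢ)^t)² cᵢ²` be the squared norm of the `t`-th (untruncated) GD
iterate.  Then at every `η > 0` with `N(η) ≥ 16Lσ²` the derivative satisfies `N'(η) ≥ 0`;
consequently, if `N(η) ≥ 16Lσ²` for some `η > 0` then `N(η') ≥ 16Lσ²` for every
`η' ≥ η`. -/
theorem stmt13 (d t : ℕ) (ht : 2 ≤ t) (hteven : Even t)
    (lam c : Fin d → ℝ) (hlam : ∀ i, 0 < lam i)
    (σ L : ℝ) (hσ : 0 < σ) (hL : 0 < L)
    (hc : ∑ i, c i ^ 2 ≤ 4 * L * σ ^ 2)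
    (N : ℝ → ℝ)
    (hN : ∀ η : ℝ, N η = ∑ i, (1 - (1 - η * lam i) ^ t) ^ 2 * c i ^ 2) :
    (∀ η : ℝ, 0 < η → 16 * L * σ ^ 2 ≤ N η → 0 ≤ deriv N η) ∧
    (∀ η : ℝ, 0 < η → 16 * L * σ ^ 2 ≤ N η →
      ∀ η' : ℝ, η ≤ η' → 16 * L * σ ^ 2 ≤ N η') :=
  stmt13_general d t hteven lam c hlam σ L hc N hN
end

section
/- Let i be an index drawn uniformly at random from {1, …, n}. Assume L ≥ 1, ‖x_i‖² ≤ Ld for every i, vᵀ H v ≥ (1/L)‖v‖², and ‖H v‖ ≤ L‖v‖. Then for every step size η with 0 ≤ η ≤ 1/(2L³d), one stochastic-gradient step contracts in expectation: E_i‖(I − η x_i x_iᵀ) v‖² ≤ (1 − η/(2L)) ‖v‖². -/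
/-- Squared Euclidean norm. -/
def sqnorm {k : ℕ} (v : Fin k → ℝ) : ℝ := ∑ i, (v i) ^ 2

/-- Euclidean inner product. -/
def dot {k : ℕ} (u v : Fin k → ℝ) : ℝ := ∑ i, u i * v i

/-!
Expanding the square, one step along a single example gives
`‖v - η⟨x,v⟩x‖² = ‖v‖² - η⟨x,v⟩²(2 - η‖x‖²)`, which is at most `‖v‖² - η⟨x,v⟩²` once
`η‖x‖² ≤ 1`; the step-size bound guarantees this since `‖xᵢ‖² ≤ Ld` and `η L d ≤ 1/(2L²)`.
Averaging over `i` turns `⟨xᵢ,v⟩²` into `vᵀHv ≥ ‖v‖²/L`, so the expected squared norm is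
at most `(1 - η/L)‖v‖²`, better than claimed.
-/

open Finset

section SqnormDot

variable {k : ℕ}

lemma sqnorm_nonneg (v : Fin k → ℝ) : 0 ≤ sqnorm v :=
  sum_nonneg fun i _ => sq_nonneg (v i)

lemma sqnorm_sub_smul (w u : Fin k → ℝ) (c : ℝ) :
    sqnorm (fun j => w j - c * u j) = sqnorm w - 2 * c * dot u w + c ^ 2 * sqnorm u := by
  have expand : ∀ j, (w j - c * u j) ^ 2 = w j ^ 2 - 2 * c * (u j * w j) + c ^ 2 * u j ^ 2 :=
    fun j => by ring
  simp only [sqnorm, dot, expand, sum_add_distrib, sum_sub_distrib, ← mul_sum]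

lemma sqnorm_sub_dot_smul_le (x v : Fin k → ℝ) {η : ℝ} (hη : 0 ≤ η)
    (hstep : η * sqnorm x ≤ 1) :
    sqnorm (fun j => v j - η * (dot x v * x j)) ≤ sqnorm v - η * dot x v ^ 2 := by
  have expand := sqnorm_sub_smul v x (η * dot x v)
  simp only [← mul_assoc] at expand ⊢
  rw [expand]
  have hdot : 0 ≤ η * dot x v ^ 2 := mul_nonneg hη (sq_nonneg _)
  nlinarith

end SqnormDot

lemma dot_mean_dot_smul {n k : ℕ} (x : Fin n → Fin k → ℝ) (v : Fin k → ℝ) :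
    dot v (fun j => (1 / (n : ℝ)) * ∑ i, dot (x i) v * x i j) =
      (1 / (n : ℝ)) * ∑ i, dot (x i) v ^ 2 := by
  simp only [dot, mul_sum, sq]
  rw [sum_comm]
  exact sum_congr rfl fun i _ => sum_congr rfl fun j _ => by ring

lemma mean_sqnorm_sub_dot_smul_le {n k : ℕ} (hn : 1 ≤ n) (x : Fin n → Fin k → ℝ)
    (v : Fin k → ℝ) {η : ℝ} (hη : 0 ≤ η) (hstep : ∀ i, η * sqnorm (x i) ≤ 1) :
    (1 / (n : ℝ)) * ∑ i, sqnorm (fun j => v j - η * (dot (x i) v * x i j)) ≤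
      sqnorm v - η * dot v (fun j => (1 / (n : ℝ)) * ∑ i, dot (x i) v * x i j) := by
  have hn0 : (0 : ℝ) < n := by exact_mod_cast hn
  have hsum := sum_le_sum fun i (_ : i ∈ univ) => sqnorm_sub_dot_smul_le (x i) v hη (hstep i)
  rw [sum_sub_distrib, sum_const, card_univ, Fintype.card_fin, nsmul_eq_mul, ← mul_sum] at hsum
  rw [dot_mean_dot_smul]
  calc (1 / (n : ℝ)) * ∑ i, sqnorm (fun j => v j - η * (dot (x i) v * x i j))
      ≤ (1 / (n : ℝ)) * (n * sqnorm v - η * ∑ i, dot (x i) v ^ 2) := by gcongr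
    _ = sqnorm v - η * ((1 / (n : ℝ)) * ∑ i, dot (x i) v ^ 2) := by field_simp

lemma mul_le_one_of_le_one_div_two_mul_pow_three {L D η : ℝ} (hL : 1 ≤ L) (hD : 0 ≤ D)
    (hη : 0 ≤ η) (hηL : η ≤ 1 / (2 * L ^ 3 * D)) : η * (L * D) ≤ 1 := by
  rcases hD.eq_or_lt with rfl | hD
  · simp
  have hL3 : L ≤ 2 * L ^ 3 := by nlinarith [one_le_pow₀ (n := 2) hL]
  calc η * (L * D) ≤ η * (2 * L ^ 3 * D) := by gcongr
    _ ≤ 1 := (le_div_iff₀ (by positivity)).mp hηL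

theorem stmt19_general (d n : ℕ) (hn : 1 ≤ n)
    (x : Fin n → Fin d → ℝ) (v : Fin d → ℝ)
    (L : ℝ) (hL : 1 ≤ L)
    (Hv : Fin d → ℝ)
    (hHv : Hv = fun j => (1 / (n : ℝ)) * ∑ i, dot (x i) v * x i j)
    (hx : ∀ i, sqnorm (x i) ≤ L * (d : ℝ))
    (hlow : (1 / L) * sqnorm v ≤ dot v Hv) :
    ∀ η : ℝ, 0 ≤ η → η ≤ 1 / (2 * L ^ 3 * (d : ℝ)) →
      (1 / (n : ℝ)) * ∑ i, sqnorm (fun j => v j - η * (dot (x i) v * x i j)) ≤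
        (1 - η / (2 * L)) * sqnorm v := by
  intro η hη hηL
  have hstep : ∀ i, η * sqnorm (x i) ≤ 1 := fun i =>
    (mul_le_mul_of_nonneg_left (hx i) hη).trans
      (mul_le_one_of_le_one_div_two_mul_pow_three hL d.cast_nonneg hη hηL)
  subst hHv
  refine (mean_sqnorm_sub_dot_smul_le hn x v hη hstep).trans ?_
  have hL0 : 0 < L := by linarith
  calc _ ≤ sqnorm v - η * (1 / L * sqnorm v) := by gcongr
    _ = (1 - η / L) * sqnorm v := by ring
    _ ≤ (1 - η / (2 * L)) * sqnorm v := by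
      gcongr
      · exact sqnorm_nonneg v
      · linarith

/-- For data `x₁, …, xₙ ∈ ℝ^d`, `H = (1/n)Σᵢ xᵢxᵢᵀ`, `v ∈ ℝ^d`, with
`L ≥ 1`, `‖xᵢ‖² ≤ Ld`, `vᵀHv ≥ (1/L)‖v‖²`, `‖Hv‖ ≤ L‖v‖`, and `i` uniform on
`{1, …, n}`: for every step size `0 ≤ η ≤ 1/(2L³d)`, one SGD step contracts in
expectation, `E_i ‖(I − η xᵢxᵢᵀ) v‖² ≤ (1 − η/(2L)) ‖v‖²`. -/
theorem stmt19 (d n : ℕ) (hd : 1 ≤ d) (hn : 1 ≤ n)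
    (x : Fin n → Fin d → ℝ) (v : Fin d → ℝ)
    (L : ℝ) (hL : 1 ≤ L)
    (Hv : Fin d → ℝ)
    (hHv : Hv = fun j => (1 / (n : ℝ)) * ∑ i, dot (x i) v * x i j)
    (hx : ∀ i, sqnorm (x i) ≤ L * (d : ℝ))
    (hlow : (1 / L) * sqnorm v ≤ dot v Hv)
    (hhigh : Real.sqrt (sqnorm Hv) ≤ L * Real.sqrt (sqnorm v)) :
    ∀ η : ℝ, 0 ≤ η → η ≤ 1 / (2 * L ^ 3 * (d : ℝ)) →
      (1 / (n : ℝ)) * ∑ i, sqnorm (fun j => v j - η * (dot (x i) v * x i j)) ≤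
        (1 - η / (2 * L)) * sqnorm v :=
  stmt19_general d n hn x v L hL Hv hHv hx hlow
end
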